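/- arXiv:1407.6194 — 4 statements merged into one kernel-verified Lean document; each statement's English description precedes it below -/
import Mathlib

section
/- Suppose L = L_{II} + L_{I} is a second-order Lagrangian on ℝⁿ where L_{II}(x,u,u̇) satisfies ζ₁L_{II} = 0, ζ₂L_{II} = 0, and L_{I}(x,u) satisfies ζ₁L_{I} = L_{I} (Zermelo conditions for a first-order parameter-invariant Lagrangian). Then L_{II} is constant along every extremal of L, being equal to minus the Hamilton function of L. -/
local notation "∞" => ((⊤ : ℕ∞) : WithTop ℕ∞)

private lemma pi_single_expand {n : ℕ} (v : Fin n → ℝ) :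
    v = ∑ i, v i • (Pi.single i (1:ℝ) : Fin n → ℝ) := by
  have := pi_eq_sum_univ v
  convert this using 2 with i
  ext j
  simp [Pi.single_apply, eq_comm]

private lemma clm_expand {n : ℕ}
    (A : ((Fin n → ℝ) × (Fin n → ℝ) × (Fin n → ℝ)) →L[ℝ] ℝ) (a b c : Fin n → ℝ) :
    A (a, b, c) = (∑ i, a i * A (Pi.single i 1, 0, 0))
      + (∑ i, b i * A (0, Pi.single i 1, 0))
      + (∑ i, c i * A (0, 0, Pi.single i 1)) := by
  have h : ((a, b, c) : (Fin n → ℝ) × (Fin n → ℝ) × (Fin n → ℝ))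
      = (∑ i, a i • (((Pi.single i 1 : Fin n → ℝ), 0, 0) : (Fin n → ℝ) × (Fin n → ℝ) × (Fin n → ℝ)))
      + (∑ i, b i • ((0, (Pi.single i 1 : Fin n → ℝ), 0) : (Fin n → ℝ) × (Fin n → ℝ) × (Fin n → ℝ)))
      + (∑ i, c i • ((0, 0, (Pi.single i 1 : Fin n → ℝ)) : (Fin n → ℝ) × (Fin n → ℝ) × (Fin n → ℝ))) := by
    simp only [Prod.ext_iff, Prod.fst_sum, Prod.snd_sum, Prod.fst_add, Prod.snd_add,
      Prod.smul_mk, smul_zero, Finset.sum_const_zero, add_zero, zero_add]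
    exact ⟨pi_single_expand a, pi_single_expand b, pi_single_expand c⟩
  rw [h, map_add, map_add, map_sum, map_sum, map_sum]
  simp only [map_smul, smul_eq_mul]

private lemma contDiff_fderiv_apply' {E : Type*} [NormedAddCommGroup E] [NormedSpace ℝ E]
    {f : E → ℝ} (hf : ContDiff ℝ (⊤ : ℕ∞) f) (v : E) :
    ContDiff ℝ ∞ (fun q => fderiv ℝ f q v) := by
  have h1 : ContDiff ℝ ∞ (fderiv ℝ f) := hf.fderiv_right (by exact_mod_cast le_top)
  exact (ContinuousLinearMap.apply ℝ ℝ v).contDiff.comp h1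

theorem stmt_8 (n : ℕ)
    (LII : ((Fin n → ℝ) × (Fin n → ℝ) × (Fin n → ℝ)) → ℝ) (hLII : ContDiff ℝ (⊤ : ℕ∞) LII)
    (LI : ((Fin n → ℝ) × (Fin n → ℝ)) → ℝ) (hLI : ContDiff ℝ (⊤ : ℕ∞) LI)
    -- L_II is parameter-independent: ζ₁L_II = 0 and ζ₂L_II = 0
    (hz1 : ∀ p : (Fin n → ℝ) × (Fin n → ℝ) × (Fin n → ℝ),
      fderiv ℝ LII p (0, p.2.1, (2 : ℝ) • p.2.2) = 0)
    (hz2 : ∀ p : (Fin n → ℝ) × (Fin n → ℝ) × (Fin n → ℝ),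
      fderiv ℝ LII p (0, 0, p.2.1) = 0)
    -- Zermelo condition on the first-order Lagrangian L_I: ζ₁L_I = L_I
    (hzI : ∀ p : (Fin n → ℝ) × (Fin n → ℝ), fderiv ℝ LI p (0, p.2) = LI p)
    -- the total Lagrangian L = L_II + L_I
    (L : ((Fin n → ℝ) × (Fin n → ℝ) × (Fin n → ℝ)) → ℝ)
    (hLdef : ∀ p, L p = LII p + LI (p.1, p.2.1))
    (x : ℝ → Fin n → ℝ) (hx : ContDiff ℝ (⊤ : ℕ∞) x)
    (P2 : Fin n → ℝ → ℝ)
    (hP2 : ∀ i t, P2 i t =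
      fderiv ℝ L (x t, deriv x t, deriv (deriv x) t) (0, 0, Pi.single i 1))
    (P1 : Fin n → ℝ → ℝ)
    (hP1 : ∀ i t, P1 i t =
      fderiv ℝ L (x t, deriv x t, deriv (deriv x) t) (0, Pi.single i 1, 0)
        - deriv (P2 i) t)
    -- x is an extremal of L: the Euler–Poisson equation holds
    (hEP : ∀ i t,
      fderiv ℝ L (x t, deriv x t, deriv (deriv x) t) (Pi.single i 1, 0, 0)
        - deriv (fun s =>
            fderiv ℝ L (x s, deriv x s, deriv (deriv x) s) (0, Pi.single i 1, 0)) t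
        + deriv (deriv (P2 i)) t = 0)
    (H : ℝ → ℝ)
    (hH : ∀ t, H t = (∑ i, P2 i t * deriv (deriv x) t i)
        + (∑ i, P1 i t * deriv x t i)
        - L (x t, deriv x t, deriv (deriv x) t)) :
    (∀ t, LII (x t, deriv x t, deriv (deriv x) t) = - H t) ∧
    (∀ s t, LII (x s, deriv x s, deriv (deriv x) s)
      = LII (x t, deriv x t, deriv (deriv x) t)) := by
  classical
  have hone : (∞ : WithTop ℕ∞) ≠ 0 := by simp
  -- smoothness of L
  have hLeq : L = fun q => LII q + LI (q.1, q.2.1) := funext hLdef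
  have hπ : ContDiff ℝ (⊤ : ℕ∞) (fun q : (Fin n → ℝ) × (Fin n → ℝ) × (Fin n → ℝ) => LI (q.1, q.2.1)) :=
    hLI.comp (contDiff_fst.prodMk (contDiff_fst.comp contDiff_snd))
  have hL : ContDiff ℝ (⊤ : ℕ∞) L := by rw [hLeq]; exact hLII.add hπ
  -- smoothness of the curve data
  have hx' : ContDiff ℝ ∞ x := hx.of_le (by simp)
  have hx1 : ContDiff ℝ ∞ (deriv x) := (contDiff_infty_iff_deriv.mp hx').2
  have hx2 : ContDiff ℝ ∞ (deriv (deriv x)) := (contDiff_infty_iff_deriv.mp hx1).2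
  have hx3 : ContDiff ℝ ∞ (deriv (deriv (deriv x))) := (contDiff_infty_iff_deriv.mp hx2).2
  have hp : ContDiff ℝ ∞ (fun t => (x t, deriv x t, deriv (deriv x) t)) :=
    hx'.prodMk (hx1.prodMk hx2)
  -- splitting of the differential of L
  have hfd : ∀ (q v : (Fin n → ℝ) × (Fin n → ℝ) × (Fin n → ℝ)),
      fderiv ℝ L q v = fderiv ℝ LII q v + fderiv ℝ LI (q.1, q.2.1) (v.1, v.2.1) := by
    intro q v
    have hd2 : HasFDerivAt (fun q : (Fin n → ℝ) × (Fin n → ℝ) × (Fin n → ℝ) => LI (q.1, q.2.1))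
        ((fderiv ℝ LI (q.1, q.2.1)).comp
          ((ContinuousLinearMap.fst ℝ (Fin n → ℝ) ((Fin n → ℝ) × (Fin n → ℝ))).prod
            ((ContinuousLinearMap.fst ℝ (Fin n → ℝ) (Fin n → ℝ)).comp
              (ContinuousLinearMap.snd ℝ (Fin n → ℝ) ((Fin n → ℝ) × (Fin n → ℝ)))))) q :=
      (hLI.differentiable (by simp) (q.1, q.2.1)).hasFDerivAt.comp q
        (((ContinuousLinearMap.fst ℝ (Fin n → ℝ) ((Fin n → ℝ) × (Fin n → ℝ))).prod
            ((ContinuousLinearMap.fst ℝ (Fin n → ℝ) (Fin n → ℝ)).comp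
              (ContinuousLinearMap.snd ℝ (Fin n → ℝ) ((Fin n → ℝ) × (Fin n → ℝ))))).hasFDerivAt)
    have h1 : fderiv ℝ L q = fderiv ℝ LII q
        + fderiv ℝ (fun q : (Fin n → ℝ) × (Fin n → ℝ) × (Fin n → ℝ) => LI (q.1, q.2.1)) q := by
      rw [hLeq]
      exact fderiv_add (hLII.differentiable (by simp) q) (hπ.differentiable (by simp) q)
    rw [h1, hd2.fderiv]
    rfl
  -- derivative of the curve
  have hpt : ∀ t, HasDerivAt (fun s => (x s, deriv x s, deriv (deriv x) s))
      (deriv x t, deriv (deriv x) t, deriv (deriv (deriv x)) t) t := fun t =>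
    ((hx'.differentiable hone t).hasDerivAt).prodMk
      (((hx1.differentiable hone t).hasDerivAt).prodMk ((hx2.differentiable hone t).hasDerivAt))
  have hF : ∀ v : (Fin n → ℝ) × (Fin n → ℝ) × (Fin n → ℝ),
      ContDiff ℝ ∞ (fun t => fderiv ℝ L (x t, deriv x t, deriv (deriv x) t) v) :=
    fun v => (contDiff_fderiv_apply' hL v).comp hp
  have hcomp : ∀ (f : ℝ → Fin n → ℝ), Differentiable ℝ f → ∀ (i : Fin n) (t : ℝ),
      HasDerivAt (fun s => f s i) (deriv f t i) t := by
    intro f hf i t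
    exact (ContinuousLinearMap.proj (R := ℝ) (φ := fun _ : Fin n => ℝ)
      i).hasFDerivAt.comp_hasDerivAt t (hf t).hasDerivAt
  have hP2f : ∀ i, P2 i =
      fun t => fderiv ℝ L (x t, deriv x t, deriv (deriv x) t) (0, 0, Pi.single i 1) :=
    fun i => funext (hP2 i)
  have hP2s : ∀ i, ContDiff ℝ ∞ (P2 i) := fun i => (hP2f i) ▸ hF _
  have hdP2s : ∀ i, ContDiff ℝ ∞ (deriv (P2 i)) :=
    fun i => (contDiff_infty_iff_deriv.mp (hP2s i)).2
  have hP1f : ∀ i, P1 i = fun t =>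
      fderiv ℝ L (x t, deriv x t, deriv (deriv x) t) (0, Pi.single i 1, 0) - deriv (P2 i) t :=
    fun i => funext (hP1 i)
  have hP1d : ∀ i t, HasDerivAt (P1 i)
      (fderiv ℝ L (x t, deriv x t, deriv (deriv x) t) (Pi.single i 1, 0, 0)) t := by
    intro i t
    have h1 : HasDerivAt
        (fun s => fderiv ℝ L (x s, deriv x s, deriv (deriv x) s) (0, Pi.single i 1, 0))
        (deriv (fun s => fderiv ℝ L (x s, deriv x s, deriv (deriv x) s) (0, Pi.single i 1, 0)) t)
        t := ((hF _).differentiable hone t).hasDerivAt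
    have h2 : HasDerivAt (deriv (P2 i)) (deriv (deriv (P2 i)) t) t :=
      ((hdP2s i).differentiable hone t).hasDerivAt
    have h3 := h1.sub h2
    have h3 : HasDerivAt (P1 i) (deriv (fun s => fderiv ℝ L (x s, deriv x s, deriv (deriv x) s) (0, Pi.single i 1, 0)) t - deriv (deriv (P2 i)) t) t := by rw [hP1f i]; exact h3
    have h4 := hEP i t
    convert h3 using 1
    linarith
  -- the function ∑ P2ᵢ ẋᵢ vanishes identically (ζ₂-condition)
  have hGfun : ∀ s, (∑ i, P2 i s * deriv x s i) = 0 := by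
    intro s
    have e1 : ∑ i, P2 i s * deriv x s i
        = fderiv ℝ L (x s, deriv x s, deriv (deriv x) s) (0, 0, deriv x s) := by
      rw [clm_expand]
      simp only [Pi.zero_apply, zero_mul, Finset.sum_const_zero, zero_add]
      exact Finset.sum_congr rfl fun i _ => by rw [hP2 i s]; ring
    rw [e1, hfd]
    have h0 : fderiv ℝ LII (x s, deriv x s, deriv (deriv x) s) (0, 0, deriv x s) = 0 := hz2 _
    simp [h0, Prod.mk_zero_zero]
  have hGsum : ∀ t,
      (∑ i, (deriv (P2 i) t * deriv x t i + P2 i t * deriv (deriv x) t i)) = 0 := by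
    intro t
    have h1 : HasDerivAt (fun s => ∑ i, P2 i s * deriv x s i)
        (∑ i, (deriv (P2 i) t * deriv x t i + P2 i t * deriv (deriv x) t i)) t :=
      HasDerivAt.fun_sum fun i _ =>
        (((hP2s i).differentiable hone t).hasDerivAt).mul
          (hcomp (deriv x) (hx1.differentiable hone) i t)
    have h2 : (fun s => ∑ i, P2 i s * deriv x s i) = fun _ => (0:ℝ) := funext hGfun
    rw [h2] at h1
    exact h1.unique (hasDerivAt_const t 0)
  -- Part 1 : H = -LII along the curve
  have part1 : ∀ t, LII (x t, deriv x t, deriv (deriv x) t) = - H t := by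
    intro t
    have eB : ∑ i, P2 i t * deriv (deriv x) t i
        = fderiv ℝ LII (x t, deriv x t, deriv (deriv x) t) (0, 0, deriv (deriv x) t) := by
      have e1 : ∑ i, P2 i t * deriv (deriv x) t i
          = fderiv ℝ L (x t, deriv x t, deriv (deriv x) t) (0, 0, deriv (deriv x) t) := by
        rw [clm_expand]
        simp only [Pi.zero_apply, zero_mul, Finset.sum_const_zero, zero_add]
        exact Finset.sum_congr rfl fun i _ => by rw [hP2 i t]; ring
      rw [e1, hfd]
      simp [Prod.mk_zero_zero]
    have eF2 : ∑ i,
        fderiv ℝ L (x t, deriv x t, deriv (deriv x) t) (0, Pi.single i 1, 0) * deriv x t i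
        = fderiv ℝ LII (x t, deriv x t, deriv (deriv x) t) (0, deriv x t, 0)
          + LI (x t, deriv x t) := by
      have e1 : ∑ i,
          fderiv ℝ L (x t, deriv x t, deriv (deriv x) t) (0, Pi.single i 1, 0) * deriv x t i
          = fderiv ℝ L (x t, deriv x t, deriv (deriv x) t) (0, deriv x t, 0) := by
        rw [clm_expand]
        simp only [Pi.zero_apply, zero_mul, Finset.sum_const_zero, add_zero, zero_add]
        exact Finset.sum_congr rfl fun i _ => mul_comm _ _
      rw [e1, hfd]
      congr 1
      exact hzI (x t, deriv x t)
    have ez : fderiv ℝ LII (x t, deriv x t, deriv (deriv x) t) (0, deriv x t, 0)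
        + 2 * fderiv ℝ LII (x t, deriv x t, deriv (deriv x) t) (0, 0, deriv (deriv x) t)
        = 0 := by
      have h0 : fderiv ℝ LII (x t, deriv x t, deriv (deriv x) t)
          (0, deriv x t, (2:ℝ) • deriv (deriv x) t) = 0 := hz1 _
      have hsplit : ((0, deriv x t, (2:ℝ) • deriv (deriv x) t) :
            (Fin n → ℝ) × (Fin n → ℝ) × (Fin n → ℝ))
          = ((0, deriv x t, 0) : (Fin n → ℝ) × (Fin n → ℝ) × (Fin n → ℝ))
            + (2:ℝ) • ((0, 0, deriv (deriv x) t) : (Fin n → ℝ) × (Fin n → ℝ) × (Fin n → ℝ)) := by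
        simp [Prod.ext_iff, Prod.smul_mk]
      rw [hsplit, map_add, map_smul] at h0
      simpa [smul_eq_mul] using h0
    have eP1 : ∑ i, P1 i t * deriv x t i
        = (∑ i, fderiv ℝ L (x t, deriv x t, deriv (deriv x) t) (0, Pi.single i 1, 0)
            * deriv x t i)
          - ∑ i, deriv (P2 i) t * deriv x t i := by
      rw [← Finset.sum_sub_distrib]
      exact Finset.sum_congr rfl fun i _ => by rw [hP1 i t]; ring
    have eG : ∑ i, deriv (P2 i) t * deriv x t i
        = - ∑ i, P2 i t * deriv (deriv x) t i := by
      have h := hGsum t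
      rw [Finset.sum_add_distrib] at h
      linarith
    have hLpt : L (x t, deriv x t, deriv (deriv x) t)
        = LII (x t, deriv x t, deriv (deriv x) t) + LI (x t, deriv x t) := hLdef _
    have hHt := hH t
    rw [eP1, eF2, eG, eB, hLpt] at hHt
    linarith [ez]
  -- Part 2 : H is constant (thus so is LII along the curve)
  have hHD : ∀ t, HasDerivAt H 0 t := by
    intro t
    have hA : HasDerivAt (fun s => ∑ i, P2 i s * deriv (deriv x) s i)
        (∑ i, (deriv (P2 i) t * deriv (deriv x) t i
          + P2 i t * deriv (deriv (deriv x)) t i)) t :=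
      HasDerivAt.fun_sum fun i _ =>
        (((hP2s i).differentiable hone t).hasDerivAt).mul
          (hcomp (deriv (deriv x)) (hx2.differentiable hone) i t)
    have hB : HasDerivAt (fun s => ∑ i, P1 i s * deriv x s i)
        (∑ i, (fderiv ℝ L (x t, deriv x t, deriv (deriv x) t) (Pi.single i 1, 0, 0)
            * deriv x t i
          + P1 i t * deriv (deriv x) t i)) t :=
      HasDerivAt.fun_sum fun i _ =>
        (hP1d i t).mul (hcomp (deriv x) (hx1.differentiable hone) i t)
    have hC : HasDerivAt (fun s => L (x s, deriv x s, deriv (deriv x) s))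
        (fderiv ℝ L (x t, deriv x t, deriv (deriv x) t)
          (deriv x t, deriv (deriv x) t, deriv (deriv (deriv x)) t)) t :=
      (hL.differentiable (by simp) _).hasFDerivAt.comp_hasDerivAt t (hpt t)
    have hHfun : H = fun s => (∑ i, P2 i s * deriv (deriv x) s i)
        + (∑ i, P1 i s * deriv x s i) - L (x s, deriv x s, deriv (deriv x) s) := funext hH
    have htot := (hA.add hB).sub hC
    replace htot : HasDerivAt H _ t := htot.congr_of_eventuallyEq (Filter.Eventually.of_forall hH)
    convert htot using 1
    rw [clm_expand, Finset.sum_add_distrib, Finset.sum_add_distrib]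
    have c1 : ∑ i, P2 i t * deriv (deriv (deriv x)) t i
        = ∑ i, deriv (deriv (deriv x)) t i
            * fderiv ℝ L (x t, deriv x t, deriv (deriv x) t) (0, 0, Pi.single i 1) :=
      Finset.sum_congr rfl fun i _ => by rw [hP2 i t]; ring
    have c2 : ∑ i, fderiv ℝ L (x t, deriv x t, deriv (deriv x) t) (Pi.single i 1, 0, 0)
          * deriv x t i
        = ∑ i, deriv x t i
            * fderiv ℝ L (x t, deriv x t, deriv (deriv x) t) (Pi.single i 1, 0, 0) :=
      Finset.sum_congr rfl fun i _ => mul_comm _ _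
    have c3 : (∑ i, deriv (P2 i) t * deriv (deriv x) t i)
          + ∑ i, P1 i t * deriv (deriv x) t i
        = ∑ i, deriv (deriv x) t i
            * fderiv ℝ L (x t, deriv x t, deriv (deriv x) t) (0, Pi.single i 1, 0) := by
      rw [← Finset.sum_add_distrib]
      exact Finset.sum_congr rfl fun i _ => by rw [hP1 i t]; ring
    linarith [c1, c2, c3]
  have hHdiff : Differentiable ℝ H := fun t => (hHD t).differentiableAt
  have hHconst : ∀ s t, H s = H t :=
    is_const_of_deriv_eq_zero hHdiff (fun t => (hHD t).deriv)
  exact ⟨part1, fun s t => by rw [part1 s, part1 t, hHconst s t]⟩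
end

section
/- Along every extremal curve of the Lagrangian L(u, u') = (u₁u'₂ − u₂u'₁)/‖u‖³ − m‖u‖ in ℝ² (with u ≠ 0), the Frenet curvature k = (u₁u'₂ − u₂u'₁)/‖u‖³ is constant. -/
/-- Standard inner product on ℝ². -/
def dot (a b : ℝ × ℝ) : ℝ := a.1 * b.1 + a.2 * b.2

/-- Euclidean norm on ℝ². -/
noncomputable def nrm (a : ℝ × ℝ) : ℝ := Real.sqrt (a.1 ^ 2 + a.2 ^ 2)

/-- L(u, u') = (u₁u'₂ − u₂u'₁)/‖u‖³ − m‖u‖. -/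
noncomputable def L (m : ℝ) (p : (ℝ × ℝ) × (ℝ × ℝ)) : ℝ :=
  (p.1.1 * p.2.2 - p.1.2 * p.2.1) / (nrm p.1) ^ 3 - m * nrm p.1

/-- Frenet curvature. -/
noncomputable def curv (u v : ℝ × ℝ) : ℝ := (u.1 * v.2 - u.2 * v.1) / (nrm u) ^ 3

/-! ### Auxiliary definitions -/

noncomputable def Rf (u : ℝ → ℝ × ℝ) (t : ℝ) : ℝ := nrm (u t)

noncomputable def A1f (m : ℝ) (u v : ℝ → ℝ × ℝ) (t : ℝ) : ℝ :=
  (v t).2 / Rf u t ^ 3 - 3 * (u t).1 * ((u t).1 * (v t).2 - (u t).2 * (v t).1) / Rf u t ^ 5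
    - m * (u t).1 / Rf u t

noncomputable def A2f (m : ℝ) (u v : ℝ → ℝ × ℝ) (t : ℝ) : ℝ :=
  -(v t).1 / Rf u t ^ 3 - 3 * (u t).2 * ((u t).1 * (v t).2 - (u t).2 * (v t).1) / Rf u t ^ 5
    - m * (u t).2 / Rf u t

noncomputable def B1f (u : ℝ → ℝ × ℝ) (t : ℝ) : ℝ := -(u t).2 / Rf u t ^ 3

noncomputable def B2f (u : ℝ → ℝ × ℝ) (t : ℝ) : ℝ := (u t).1 / Rf u t ^ 3

noncomputable def DB1f (u v : ℝ → ℝ × ℝ) (t : ℝ) : ℝ :=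
  (-(v t).2 * Rf u t ^ 3 - -(u t).2 * (3 * Rf u t ^ 2 * (dot (u t) (v t) / Rf u t)))
    / (Rf u t ^ 3) ^ 2

noncomputable def DB2f (u v : ℝ → ℝ × ℝ) (t : ℝ) : ℝ :=
  ((v t).1 * Rf u t ^ 3 - (u t).1 * (3 * Rf u t ^ 2 * (dot (u t) (v t) / Rf u t)))
    / (Rf u t ^ 3) ^ 2

noncomputable def Q1f (m : ℝ) (u v : ℝ → ℝ × ℝ) (t : ℝ) : ℝ :=
  (v t).2 / Rf u t ^ 3 + m * (u t).1 / Rf u t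

noncomputable def Q2f (m : ℝ) (u v : ℝ → ℝ × ℝ) (t : ℝ) : ℝ :=
  -(v t).1 / Rf u t ^ 3 + m * (u t).2 / Rf u t

/-! ### Small helpers -/

lemma HasDerivAt.congr_d {f : ℝ → ℝ} {a b : ℝ} {t : ℝ} (h : HasDerivAt f a t) (hab : a = b) :
    HasDerivAt f b t := hab ▸ h

lemma sq_sum_pos {a : ℝ × ℝ} (ha : a ≠ 0) : 0 < a.1 ^ 2 + a.2 ^ 2 := by
  have h : a.1 ≠ 0 ∨ a.2 ≠ 0 := by
    by_contra hc
    push_neg at hc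
    exact ha (Prod.ext hc.1 hc.2)
  rcases h with h | h <;> positivity

lemma nrm_pos {a : ℝ × ℝ} (ha : a ≠ 0) : 0 < nrm a := Real.sqrt_pos.mpr (sq_sum_pos ha)

lemma nrm_sq {a : ℝ × ℝ} (ha : a ≠ 0) : nrm a ^ 2 = a.1 ^ 2 + a.2 ^ 2 :=
  Real.sq_sqrt (sq_sum_pos ha).le

lemma hd_fst {f : ℝ → ℝ × ℝ} {p : ℝ × ℝ} {t : ℝ} (h : HasDerivAt f p t) :
    HasDerivAt (fun s => (f s).1) p.1 t :=
  (ContinuousLinearMap.fst ℝ ℝ ℝ).hasFDerivAt.comp_hasDerivAt t h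

lemma hd_snd {f : ℝ → ℝ × ℝ} {p : ℝ × ℝ} {t : ℝ} (h : HasDerivAt f p t) :
    HasDerivAt (fun s => (f s).2) p.2 t :=
  (ContinuousLinearMap.snd ℝ ℝ ℝ).hasFDerivAt.comp_hasDerivAt t h

/-! ### Algebraic identities -/

lemma alg1 (a b c d R mm : ℝ) (hR : R ≠ 0) (h2 : R ^ 2 = a ^ 2 + b ^ 2) :
    d / R ^ 3 + mm * a / R =
      (-d * R ^ 3 - -b * (3 * R ^ 2 * ((a * c + b * d) / R))) / (R ^ 3) ^ 2
        - (d / R ^ 3 - 3 * a * (a * d - b * c) / R ^ 5 - mm * a / R) := by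
  field_simp
  linear_combination (3 * d) * h2

lemma alg2 (a b c d R mm : ℝ) (hR : R ≠ 0) (h2 : R ^ 2 = a ^ 2 + b ^ 2) :
    -c / R ^ 3 + mm * b / R =
      (c * R ^ 3 - a * (3 * R ^ 2 * ((a * c + b * d) / R))) / (R ^ 3) ^ 2
        - (-c / R ^ 3 - 3 * b * (a * d - b * c) / R ^ 5 - mm * b / R) := by
  field_simp
  linear_combination (-3 * c) * h2

lemma algk (a b c d R mm : ℝ) (hR : R ≠ 0) (h2 : R ^ 2 = a ^ 2 + b ^ 2) :
    (a * d - b * c) / R ^ 3 =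
      a * (d / R ^ 3 + mm * a / R) + b * (-c / R ^ 3 + mm * b / R) - mm * R := by
  field_simp
  linear_combination (mm * R ^ 2) * h2

/-! ### fderiv of L -/

lemma L_fderiv_apply (m : ℝ) (a b : ℝ × ℝ) (ha : a ≠ 0) (w : (ℝ × ℝ) × (ℝ × ℝ)) :
    fderiv ℝ (L m) (a, b) w =
      (b.2 / (nrm a) ^ 3 - 3 * a.1 * (a.1 * b.2 - a.2 * b.1) / (nrm a) ^ 5 - m * a.1 / nrm a) * w.1.1
      + (-b.1 / (nrm a) ^ 3 - 3 * a.2 * (a.1 * b.2 - a.2 * b.1) / (nrm a) ^ 5 - m * a.2 / nrm a) * w.1.2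
      + (-a.2 / (nrm a) ^ 3) * w.2.1 + (a.1 / (nrm a) ^ 3) * w.2.2 := by
  have h2 : 0 < a.1 * a.1 + a.2 * a.2 := by
    have := sq_sum_pos ha
    nlinarith [this]
  set S : ℝ := Real.sqrt (a.1 * a.1 + a.2 * a.2) with hSdef
  have hSpos : 0 < S := Real.sqrt_pos.mpr h2
  have hSne : S ≠ 0 := hSpos.ne'
  have hd11 : HasFDerivAt (fun p : (ℝ × ℝ) × (ℝ × ℝ) => p.1.1)
      ((ContinuousLinearMap.fst ℝ ℝ ℝ).comp (ContinuousLinearMap.fst ℝ (ℝ × ℝ) (ℝ × ℝ))) (a, b) :=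
    ContinuousLinearMap.hasFDerivAt ((ContinuousLinearMap.fst ℝ ℝ ℝ).comp (ContinuousLinearMap.fst ℝ (ℝ × ℝ) (ℝ × ℝ)))
  have hd12 : HasFDerivAt (fun p : (ℝ × ℝ) × (ℝ × ℝ) => p.1.2)
      ((ContinuousLinearMap.snd ℝ ℝ ℝ).comp (ContinuousLinearMap.fst ℝ (ℝ × ℝ) (ℝ × ℝ))) (a, b) :=
    ContinuousLinearMap.hasFDerivAt ((ContinuousLinearMap.snd ℝ ℝ ℝ).comp (ContinuousLinearMap.fst ℝ (ℝ × ℝ) (ℝ × ℝ)))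
  have hd21 : HasFDerivAt (fun p : (ℝ × ℝ) × (ℝ × ℝ) => p.2.1)
      ((ContinuousLinearMap.fst ℝ ℝ ℝ).comp (ContinuousLinearMap.snd ℝ (ℝ × ℝ) (ℝ × ℝ))) (a, b) :=
    ContinuousLinearMap.hasFDerivAt ((ContinuousLinearMap.fst ℝ ℝ ℝ).comp (ContinuousLinearMap.snd ℝ (ℝ × ℝ) (ℝ × ℝ)))
  have hd22 : HasFDerivAt (fun p : (ℝ × ℝ) × (ℝ × ℝ) => p.2.2)
      ((ContinuousLinearMap.snd ℝ ℝ ℝ).comp (ContinuousLinearMap.snd ℝ (ℝ × ℝ) (ℝ × ℝ))) (a, b) :=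
    ContinuousLinearMap.hasFDerivAt ((ContinuousLinearMap.snd ℝ ℝ ℝ).comp (ContinuousLinearMap.snd ℝ (ℝ × ℝ) (ℝ × ℝ)))
  have hq := (hd11.mul hd11).add (hd12.mul hd12)
  have hn := hq.sqrt (x := (a, b)) h2.ne'
  have hinv0 : HasDerivAt (fun z : ℝ => (z ^ 3)⁻¹) (-(↑3 * S ^ 2) / (S ^ 3) ^ 2) S :=
    (hasDerivAt_pow 3 S).inv (pow_ne_zero 3 hSne)
  have hinv := hinv0.comp_hasFDerivAt (a, b) hn
  have hW := (hd11.mul hd22).sub (hd12.mul hd21)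
  have h := (hW.mul hinv).sub (hn.const_mul m)
  have hfun : (fun p : (ℝ × ℝ) × (ℝ × ℝ) =>
      (p.1.1 * p.2.2 - p.1.2 * p.2.1) *
        ((fun z : ℝ => (z ^ 3)⁻¹) ∘ fun p : (ℝ × ℝ) × (ℝ × ℝ) =>
          Real.sqrt (p.1.1 * p.1.1 + p.1.2 * p.1.2)) p
        - m * Real.sqrt (p.1.1 * p.1.1 + p.1.2 * p.1.2)) = L m := by
    funext p
    simp [L, nrm, div_eq_mul_inv, pow_two]
  replace h := h.congr_of_eventuallyEq (Filter.Eventually.of_forall fun p => congrFun hfun.symm p)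
  rw [h.fderiv]
  have hnrm : nrm a = S := by simp [nrm, pow_two, hSdef]
  simp only [ContinuousLinearMap.coe_sub', Pi.sub_apply, ContinuousLinearMap.add_apply,
    ContinuousLinearMap.coe_smul', Pi.smul_apply, ContinuousLinearMap.smul_apply,
    ContinuousLinearMap.coe_comp', Function.comp_apply, ContinuousLinearMap.coe_fst',
    ContinuousLinearMap.coe_snd', smul_eq_mul, hnrm, Pi.mul_apply, Pi.add_apply, ← hSdef]
  field_simp
  ring

/-! ### The key conservation argument -/

lemma key (m : ℝ) (u v w : ℝ → ℝ × ℝ)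
    (hU : ∀ t, HasDerivAt u (v t) t) (hV : ∀ t, HasDerivAt v (w t) t)
    (hne : ∀ t, u t ≠ 0)
    (hE1 : ∀ t, - deriv (A1f m u v) t + deriv (deriv (B1f u)) t = 0)
    (hE2 : ∀ t, - deriv (A2f m u v) t + deriv (deriv (B2f u)) t = 0) :
    ∀ s t, curv (u s) (v s) = curv (u t) (v t) := by
  have hRpos : ∀ t, 0 < Rf u t := fun t => nrm_pos (hne t)
  have hRne : ∀ t, Rf u t ≠ 0 := fun t => (hRpos t).ne'
  have hR2 : ∀ t, Rf u t ^ 2 = (u t).1 ^ 2 + (u t).2 ^ 2 := fun t => nrm_sq (hne t)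
  have hu1 : ∀ t, HasDerivAt (fun s => (u s).1) ((v t).1) t := fun t => hd_fst (hU t)
  have hu2 : ∀ t, HasDerivAt (fun s => (u s).2) ((v t).2) t := fun t => hd_snd (hU t)
  have hv1 : ∀ t, HasDerivAt (fun s => (v s).1) ((w t).1) t := fun t => hd_fst (hV t)
  have hv2 : ∀ t, HasDerivAt (fun s => (v s).2) ((w t).2) t := fun t => hd_snd (hV t)
  have hR : ∀ t, HasDerivAt (Rf u) (dot (u t) (v t) / Rf u t) t := by
    intro t
    have h1 := (((hu1 t).pow 2).add ((hu2 t).pow 2)).sqrt (sq_sum_pos (hne t)).ne'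
    refine h1.congr_d ?_
    have hs : Real.sqrt ((u t).1 ^ 2 + (u t).2 ^ 2) = Rf u t := rfl
    simp only [Pi.add_apply, Pi.pow_apply, hs]
    have := hRne t
    field_simp [dot]
    simp only [dot]
    ring
  -- derivative facts
  have hdR : ∀ t, DifferentiableAt ℝ (Rf u) t := fun t => (hR t).differentiableAt
  have hdu1 : ∀ t, DifferentiableAt ℝ (fun s => (u s).1) t := fun t => (hu1 t).differentiableAt
  have hdu2 : ∀ t, DifferentiableAt ℝ (fun s => (u s).2) t := fun t => (hu2 t).differentiableAt
  have hdv1 : ∀ t, DifferentiableAt ℝ (fun s => (v s).1) t := fun t => (hv1 t).differentiableAt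
  have hdv2 : ∀ t, DifferentiableAt ℝ (fun s => (v s).2) t := fun t => (hv2 t).differentiableAt
  have hdot : ∀ t, DifferentiableAt ℝ (fun s => dot (u s) (v s)) t := fun t =>
    ((hdu1 t).mul (hdv1 t)).add ((hdu2 t).mul (hdv2 t))
  have hB1 : ∀ t, HasDerivAt (B1f u) (DB1f u v t) t := by
    intro t
    have hden : HasDerivAt (fun s => Rf u s ^ 3) (3 * Rf u t ^ 2 * (dot (u t) (v t) / Rf u t)) t :=
      ((hR t).pow 3).congr_d (by norm_num)
    exact ((hu2 t).neg.div hden (pow_ne_zero 3 (hRne t)))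
  have hB2 : ∀ t, HasDerivAt (B2f u) (DB2f u v t) t := by
    intro t
    have hden : HasDerivAt (fun s => Rf u s ^ 3) (3 * Rf u t ^ 2 * (dot (u t) (v t) / Rf u t)) t :=
      ((hR t).pow 3).congr_d (by norm_num)
    exact ((hu1 t).div hden (pow_ne_zero 3 (hRne t)))
  have hdA1 : ∀ t, DifferentiableAt ℝ (A1f m u v) t := by
    intro t
    exact (((hdv2 t).div ((hdR t).pow 3) (pow_ne_zero 3 (hRne t))).sub
      ((((hdu1 t).const_mul 3).mul
          (((hdu1 t).mul (hdv2 t)).sub ((hdu2 t).mul (hdv1 t)))).div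
        ((hdR t).pow 5) (pow_ne_zero 5 (hRne t)))).sub
      (((hdu1 t).const_mul m).div (hdR t) (hRne t))
  have hdA2 : ∀ t, DifferentiableAt ℝ (A2f m u v) t := by
    intro t
    exact (((hdv1 t).neg.div ((hdR t).pow 3) (pow_ne_zero 3 (hRne t))).sub
      ((((hdu2 t).const_mul 3).mul
          (((hdu1 t).mul (hdv2 t)).sub ((hdu2 t).mul (hdv1 t)))).div
        ((hdR t).pow 5) (pow_ne_zero 5 (hRne t)))).sub
      (((hdu2 t).const_mul m).div (hdR t) (hRne t))
  have hdDB1 : ∀ t, DifferentiableAt ℝ (DB1f u v) t := by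
    intro t
    exact (((hdv2 t).neg.mul ((hdR t).pow 3)).sub
      ((hdu2 t).neg.mul ((((hdR t).pow 2).const_mul 3).mul
        ((hdot t).div (hdR t) (hRne t))))).div
      (((hdR t).pow 3).pow 2) (pow_ne_zero 2 (pow_ne_zero 3 (hRne t)))
  have hdDB2 : ∀ t, DifferentiableAt ℝ (DB2f u v) t := by
    intro t
    exact (((hdv1 t).mul ((hdR t).pow 3)).sub
      ((hdu1 t).mul ((((hdR t).pow 2).const_mul 3).mul
        ((hdot t).div (hdR t) (hRne t))))).div
      (((hdR t).pow 3).pow 2) (pow_ne_zero 2 (pow_ne_zero 3 (hRne t)))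
  have hdQ1 : ∀ t, DifferentiableAt ℝ (Q1f m u v) t := by
    intro t
    exact ((hdv2 t).div ((hdR t).pow 3) (pow_ne_zero 3 (hRne t))).add
      (((hdu1 t).const_mul m).div (hdR t) (hRne t))
  have hdQ2 : ∀ t, DifferentiableAt ℝ (Q2f m u v) t := by
    intro t
    exact ((hdv1 t).neg.div ((hdR t).pow 3) (pow_ne_zero 3 (hRne t))).add
      (((hdu2 t).const_mul m).div (hdR t) (hRne t))
  have hDB1eq : deriv (B1f u) = DB1f u v := funext fun s => (hB1 s).deriv
  have hDB2eq : deriv (B2f u) = DB2f u v := funext fun s => (hB2 s).deriv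
  have hQ1eq : Q1f m u v = fun s => DB1f u v s - A1f m u v s := by
    funext s
    simp only [Q1f, DB1f, A1f, dot]
    exact alg1 (u s).1 (u s).2 (v s).1 (v s).2 (Rf u s) m (hRne s) (hR2 s)
  have hQ2eq : Q2f m u v = fun s => DB2f u v s - A2f m u v s := by
    funext s
    simp only [Q2f, DB2f, A2f, dot]
    exact alg2 (u s).1 (u s).2 (v s).1 (v s).2 (Rf u s) m (hRne s) (hR2 s)
  have hQ1d : ∀ t, deriv (Q1f m u v) t = 0 := by
    intro t
    rw [hQ1eq, deriv_fun_sub (hdDB1 t) (hdA1 t)]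
    have h := hE1 t
    rw [hDB1eq] at h
    linarith
  have hQ2d : ∀ t, deriv (Q2f m u v) t = 0 := by
    intro t
    rw [hQ2eq, deriv_fun_sub (hdDB2 t) (hdA2 t)]
    have h := hE2 t
    rw [hDB2eq] at h
    linarith
  have hQ1has : ∀ t, HasDerivAt (Q1f m u v) 0 t := by
    intro t
    have h := (hdQ1 t).hasDerivAt
    rwa [hQ1d t] at h
  have hQ2has : ∀ t, HasDerivAt (Q2f m u v) 0 t := by
    intro t
    have h := (hdQ2 t).hasDerivAt
    rwa [hQ2d t] at h
  have hkeq : (fun r => curv (u r) (v r)) =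
      fun r => (u r).1 * Q1f m u v r + (u r).2 * Q2f m u v r - m * Rf u r := by
    funext s
    simp only [curv, Q1f, Q2f]
    exact algk (u s).1 (u s).2 (v s).1 (v s).2 (Rf u s) m (hRne s) (hR2 s)
  have hk : ∀ t, HasDerivAt (fun r => curv (u r) (v r)) 0 t := by
    intro t
    rw [hkeq]
    have h := (((hu1 t).mul (hQ1has t)).add ((hu2 t).mul (hQ2has t))).sub ((hR t).const_mul m)
    refine h.congr_d ?_
    simp only [Q1f, Q2f, dot]
    have := hRne t
    field_simp
    ring
  exact fun s t => is_const_of_deriv_eq_zero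
    (fun r => (hk r).differentiableAt) (fun r => (hk r).deriv) s t

theorem stmt_9 (m : ℝ) (x : ℝ → ℝ × ℝ) (hx : ContDiff ℝ (⊤ : ℕ∞) x)
    (hu : ∀ t, deriv x t ≠ 0)
    -- x is an extremal: the Euler–Poisson equation of L holds (component-wise)
    (hEP : ∀ e : ℝ × ℝ, e = (1, 0) ∨ e = (0, 1) → ∀ t,
      - deriv (fun s =>
          fderiv ℝ (L m) (deriv x s, deriv (deriv x) s) (e, 0)) t
        + deriv (deriv (fun s =>
            fderiv ℝ (L m) (deriv x s, deriv (deriv x) s) (0, e))) t = 0) :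
    ∀ s t, curv (deriv x s) (deriv (deriv x) s)
      = curv (deriv x t) (deriv (deriv x) t) := by
  have hx' : ContDiff ℝ (⊤ : ℕ∞) x := hx.of_le (by simp)
  obtain ⟨hdx, hcu⟩ := contDiff_infty_iff_deriv.mp hx'
  obtain ⟨hdu, hcv⟩ := contDiff_infty_iff_deriv.mp hcu
  obtain ⟨hdv, _⟩ := contDiff_infty_iff_deriv.mp hcv
  have hU : ∀ t, HasDerivAt (deriv x) (deriv (deriv x) t) t := fun t => (hdu t).hasDerivAt
  have hV : ∀ t, HasDerivAt (deriv (deriv x)) (deriv (deriv (deriv x)) t) t :=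
    fun t => (hdv t).hasDerivAt
  have hA1 : (fun s => fderiv ℝ (L m) (deriv x s, deriv (deriv x) s)
      ((((1 : ℝ), (0 : ℝ)) : ℝ × ℝ), (0 : ℝ × ℝ))) = A1f m (deriv x) (deriv (deriv x)) := by
    funext s
    rw [L_fderiv_apply m _ _ (hu s)]
    simp [A1f, Rf]
  have hB1 : (fun s => fderiv ℝ (L m) (deriv x s, deriv (deriv x) s)
      ((0 : ℝ × ℝ), (((1 : ℝ), (0 : ℝ)) : ℝ × ℝ))) = B1f (deriv x) := by
    funext s
    rw [L_fderiv_apply m _ _ (hu s)]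
    simp [B1f, Rf]
  have hA2 : (fun s => fderiv ℝ (L m) (deriv x s, deriv (deriv x) s)
      ((((0 : ℝ), (1 : ℝ)) : ℝ × ℝ), (0 : ℝ × ℝ))) = A2f m (deriv x) (deriv (deriv x)) := by
    funext s
    rw [L_fderiv_apply m _ _ (hu s)]
    simp [A2f, Rf]
  have hB2 : (fun s => fderiv ℝ (L m) (deriv x s, deriv (deriv x) s)
      ((0 : ℝ × ℝ), (((0 : ℝ), (1 : ℝ)) : ℝ × ℝ))) = B2f (deriv x) := by
    funext s
    rw [L_fderiv_apply m _ _ (hu s)]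
    simp [B2f, Rf]
  have hE1 : ∀ t, - deriv (A1f m (deriv x) (deriv (deriv x))) t
      + deriv (deriv (B1f (deriv x))) t = 0 := by
    intro t
    have h := hEP (1, 0) (Or.inl rfl) t
    rw [hA1, hB1] at h
    exact h
  have hE2 : ∀ t, - deriv (A2f m (deriv x) (deriv (deriv x))) t
      + deriv (deriv (B2f (deriv x))) t = 0 := by
    intro t
    have h := hEP (0, 1) (Or.inr rfl) t
    rw [hA2, hB2] at h
    exact h
  exact key m (deriv x) (deriv (deriv x)) (deriv (deriv (deriv x))) hU hV hu hE1 hE2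
end

section
/- Let A : ℝ² \ {0} → ℝ be a solution of the PDE ‖u‖²(v·∇_u)A + 3A(u·v) = 0 holding for all v ∈ ℝ², where the equation is required for all u ≠ 0. Then A(u) = α‖u‖⁻³ for some constant α (on a connected domain). -/
/-! Since `d(A ‖u‖ ^ p) = ‖u‖ ^ (p - 2) (‖u‖ ^ 2 dA + p A ⟨u, ·⟩)`, the equation says exactly that
`u ↦ A u * ‖u‖ ^ 3` has zero derivative on the punctured plane; as the punctured plane is open and
connected, this function is a constant `α`. -/

open ContinuousLinearMap

lemma sq_add_sq_pos_of_ne_zero {u : ℝ × ℝ} (hu : u ≠ 0) : 0 < u.1 ^ 2 + u.2 ^ 2 := by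
  have : u.1 ≠ 0 ∨ u.2 ≠ 0 := by
    by_contra! h
    exact hu (Prod.ext h.1 h.2)
  rcases this with h | h <;> positivity

lemma nrm_pos_s13 {u : ℝ × ℝ} (hu : u ≠ 0) : 0 < nrm u :=
  Real.sqrt_pos.mpr (sq_add_sq_pos_of_ne_zero hu)

noncomputable def dotL (u : ℝ × ℝ) : ℝ × ℝ →L[ℝ] ℝ :=
  u.1 • fst ℝ ℝ ℝ + u.2 • snd ℝ ℝ ℝ

@[simp]
lemma dotL_apply (u v : ℝ × ℝ) : dotL u v = dot u v := rfl

lemma hasFDerivAt_sq_add_sq (u : ℝ × ℝ) :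
    HasFDerivAt (fun w : ℝ × ℝ => w.1 ^ 2 + w.2 ^ 2) ((2 : ℝ) • dotL u) u := by
  refine (((hasFDerivAt_fst (p := u)).pow 2).add ((hasFDerivAt_snd (p := u)).pow 2)).congr_fderiv
    (ext fun v => ?_)
  simp only [add_apply, smul_apply, coe_fst', coe_snd', smul_eq_mul, dotL_apply, dot]
  ring

lemma hasFDerivAt_nrm {u : ℝ × ℝ} (hu : u ≠ 0) :
    HasFDerivAt nrm ((nrm u)⁻¹ • dotL u) u := by
  refine ((hasFDerivAt_sq_add_sq u).sqrt (sq_add_sq_pos_of_ne_zero hu).ne').congr_fderiv ?_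
  rw [smul_smul, ← nrm]
  congr 1
  field_simp

lemma hasFDerivAt_nrm_rpow {u : ℝ × ℝ} (hu : u ≠ 0) (p : ℝ) :
    HasFDerivAt (fun w => nrm w ^ p) ((p * nrm u ^ (p - 2)) • dotL u) u := by
  refine ((hasFDerivAt_nrm hu).rpow_const (p := p) (Or.inl (nrm_pos_s13 hu).ne')).congr_fderiv ?_
  rw [smul_smul, mul_assoc, ← Real.rpow_neg_one, ← Real.rpow_add (nrm_pos_s13 hu)]
  congr 3
  ring

lemma hasFDerivAt_mul_nrm_rpow_eq_zero {A : ℝ × ℝ → ℝ} {A' : ℝ × ℝ →L[ℝ] ℝ} {u : ℝ × ℝ}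
    {p : ℝ} (hA : HasFDerivAt A A' u) (hu : u ≠ 0)
    (hPDE : ∀ v, nrm u ^ 2 * A' v + p * A u * dot u v = 0) :
    HasFDerivAt (fun w => A w * nrm w ^ p) (0 : ℝ × ℝ →L[ℝ] ℝ) u := by
  refine (hA.mul (hasFDerivAt_nrm_rpow hu p)).congr_fderiv (ext fun v => ?_)
  have hsplit : nrm u ^ p = nrm u ^ (p - 2) * nrm u ^ 2 := by
    rw [← Real.rpow_natCast (nrm u) 2, ← Real.rpow_add (nrm_pos_s13 hu)]
    norm_num
  simp only [add_apply, smul_apply, smul_eq_mul, dotL_apply, zero_apply]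
  rw [hsplit]
  linear_combination nrm u ^ (p - 2) * hPDE v

theorem exists_eq_mul_nrm_rpow_neg_of_pde (p : ℝ) (A : ℝ × ℝ → ℝ)
    (hdiff : ∀ u : ℝ × ℝ, u ≠ 0 → DifferentiableAt ℝ A u)
    (hPDE : ∀ u : ℝ × ℝ, u ≠ 0 → ∀ v : ℝ × ℝ,
      nrm u ^ 2 * fderiv ℝ A u v + p * A u * dot u v = 0) :
    ∃ α : ℝ, ∀ u : ℝ × ℝ, u ≠ 0 → A u = α * nrm u ^ (-p) := by
  have hzero : ∀ u : ℝ × ℝ, u ≠ 0 → HasFDerivAt (fun w => A w * nrm w ^ p) (0 : ℝ × ℝ →L[ℝ] ℝ) u :=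
    fun u hu => hasFDerivAt_mul_nrm_rpow_eq_zero (hdiff u hu).hasFDerivAt hu (hPDE u hu)
  obtain ⟨α, hα⟩ := isOpen_compl_singleton.exists_is_const_of_fderiv_eq_zero
    (isConnected_compl_singleton_of_one_lt_rank (by simp; norm_num) (0 : ℝ × ℝ)).isPreconnected
    (fun u hu => (hzero u hu).differentiableAt.differentiableWithinAt)
    (fun u hu => (hzero u hu).fderiv)
  refine ⟨α, fun u hu => ?_⟩
  rw [← hα u hu, mul_assoc, ← Real.rpow_add (nrm_pos_s13 hu), add_neg_cancel, Real.rpow_zero,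
    mul_one]

theorem stmt_13 (A : ℝ × ℝ → ℝ)
    (hdiff : ∀ u : ℝ × ℝ, u ≠ 0 → DifferentiableAt ℝ A u)
    (hPDE : ∀ u : ℝ × ℝ, u ≠ 0 → ∀ v : ℝ × ℝ,
      (nrm u) ^ 2 * fderiv ℝ A u v + 3 * A u * dot u v = 0) :
    ∃ α : ℝ, ∀ u : ℝ × ℝ, u ≠ 0 → A u = α * (nrm u) ^ (-3 : ℤ) := by
  obtain ⟨α, hα⟩ := exists_eq_mul_nrm_rpow_neg_of_pde 3 A hdiff hPDE
  refine ⟨α, fun u hu => ?_⟩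
  rw [hα u hu, ← Real.rpow_intCast]
  norm_num
end

section
/- Let x : ℝ → ℝ² be a unit-speed curve (‖x'‖ = 1) satisfying x''' + ‖x''‖²x' = 0 with ‖x''‖ = k₀ > 0 constant at the initial time. Then ‖x''‖ = k₀ for all times, and the curve traces a circle of radius 1/k₀. -/
open scoped ContDiff


private lemma hdFst {y : ℝ → ℝ × ℝ} {y' : ℝ × ℝ} {s : ℝ} (h : HasDerivAt y y' s) :
    HasDerivAt (fun t => (y t).1) y'.1 s := by
  simpa using h.hasFDerivAt.fst.hasDerivAt

private lemma hdSnd {y : ℝ → ℝ × ℝ} {y' : ℝ × ℝ} {s : ℝ} (h : HasDerivAt y y' s) :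
    HasDerivAt (fun t => (y t).2) y'.2 s := by
  simpa using h.hasFDerivAt.snd.hasDerivAt

theorem stmt_18 (x : ℝ → ℝ × ℝ) (hx : ContDiff ℝ (⊤ : ℕ∞) x)
    (hunit : ∀ s, nrm (deriv x s) = 1)
    (k₀ : ℝ) (hk₀ : 0 < k₀) (h0 : nrm (deriv (deriv x) 0) = k₀)
    (heq : ∀ s, deriv (deriv (deriv x)) s
        + (nrm (deriv (deriv x) s)) ^ 2 • deriv x s = 0) :
    (∀ s, nrm (deriv (deriv x) s) = k₀) ∧
    (∃ c : ℝ × ℝ, ∀ s, nrm (x s - c) = 1 / k₀) := by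
  set u := deriv x with hu_def
  set v := deriv u with hv_def
  set w := deriv v with hw_def
  have hx' : ContDiff ℝ ∞ x := hx.of_le (mod_cast le_top)
  have h1 := contDiff_infty_iff_deriv.mp hx'
  have h2 := contDiff_infty_iff_deriv.mp h1.2
  have h3 := contDiff_infty_iff_deriv.mp h2.2
  have hdx : Differentiable ℝ x := h1.1
  have hdu : Differentiable ℝ u := h2.1
  have hdv : Differentiable ℝ v := h3.1
  -- squared norms
  have sqnn : ∀ a : ℝ × ℝ, 0 ≤ a.1 ^ 2 + a.2 ^ 2 := fun a => by positivity
  have nrm_sq : ∀ a : ℝ × ℝ, (nrm a) ^ 2 = a.1 ^ 2 + a.2 ^ 2 := fun a =>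
    Real.sq_sqrt (sqnn a)
  -- unit speed squared
  have hunit2 : ∀ s, (u s).1 ^ 2 + (u s).2 ^ 2 = 1 := fun s => by
    rw [← nrm_sq (u s), hunit s]; norm_num
  -- orthogonality u·v = 0
  have key : ∀ s, (u s).1 * (v s).1 + (u s).2 * (v s).2 = 0 := by
    intro s
    have h1' : HasDerivAt (fun t => (u t).1) ((v s).1) s := hdFst (hdu s).hasDerivAt
    have h2' : HasDerivAt (fun t => (u t).2) ((v s).2) s := hdSnd (hdu s).hasDerivAt
    have hD := (h1'.mul h1').add (h2'.mul h2')
    have hC : (fun t => (u t).1 * (u t).1 + (u t).2 * (u t).2) = fun _ : ℝ => (1 : ℝ) := by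
      funext t; have := hunit2 t; nlinarith
    rw [show ((fun t => (u t).1) * (fun t => (u t).1)) + (fun t => (u t).2) * (fun t => (u t).2) = fun _ : ℝ => (1 : ℝ) from hC] at hD
    have := hD.unique (hasDerivAt_const s 1)
    nlinarith
  set N : ℝ → ℝ := fun s => (v s).1 ^ 2 + (v s).2 ^ 2 with hN_def
  -- w = -(N s) • u s
  have hw_eq : ∀ s, w s = (-(N s)) • u s := by
    intro s
    have h := heq s
    have : (nrm (v s)) ^ 2 = N s := nrm_sq (v s)
    rw [this] at h
    have := eq_neg_of_add_eq_zero_left h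
    rw [this]; simp [neg_smul]
  -- N has derivative 0 everywhere
  have hN' : ∀ s, HasDerivAt N 0 s := by
    intro s
    have h1' : HasDerivAt (fun t => (v t).1) ((w s).1) s := hdFst (hdv s).hasDerivAt
    have h2' : HasDerivAt (fun t => (v t).2) ((w s).2) s := hdSnd (hdv s).hasDerivAt
    have hD := ((h1'.mul h1').add (h2'.mul h2'))
    have hw1 : (w s).1 = -(N s) * (u s).1 := by rw [hw_eq s]; rfl
    have hw2 : (w s).2 = -(N s) * (u s).2 := by rw [hw_eq s]; rfl
    have hzero : (w s).1 * (v s).1 + (v s).1 * (w s).1 + ((w s).2 * (v s).2 + (v s).2 * (w s).2)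
        = 0 := by
      rw [hw1, hw2]; linear_combination (-2 * N s) * key s
    have : N = fun t => (v t).1 * (v t).1 + (v t).2 * (v t).2 := by
      funext t; simp [hN_def]; ring
    rw [this, ← hzero]
    exact hD
  have hNconst : ∀ s, N s = N 0 := by
    intro s
    exact is_const_of_deriv_eq_zero (fun t => (hN' t).differentiableAt)
      (fun t => (hN' t).deriv) s 0
  have hN0 : N 0 = k₀ ^ 2 := by
    have := nrm_sq (v 0)
    rw [h0] at this; exact this.symm
  have hNval : ∀ s, N s = k₀ ^ 2 := fun s => (hNconst s).trans hN0
  have part1 : ∀ s, nrm (v s) = k₀ := by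
    intro s
    have : nrm (v s) = Real.sqrt (N s) := rfl
    rw [this, hNval s, Real.sqrt_sq hk₀.le]
  refine ⟨part1, ?_⟩
  -- the center
  set g : ℝ → ℝ × ℝ := fun s => x s + (k₀ ^ 2)⁻¹ • v s with hg_def
  have hg' : ∀ s, HasDerivAt g 0 s := by
    intro s
    have hgd : HasDerivAt g (u s + (k₀ ^ 2)⁻¹ • w s) s :=
      by exact (hdx s).hasDerivAt.add (((hdv s).hasDerivAt).const_smul ((k₀ ^ 2)⁻¹))
    have : u s + (k₀ ^ 2)⁻¹ • w s = 0 := by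
      rw [hw_eq s, hNval s, smul_smul]
      have hk2 : (k₀ ^ 2)⁻¹ * -(k₀ ^ 2) = -1 := by
        field_simp
      rw [hk2]; simp
    rwa [this] at hgd
  have hgconst : ∀ s, g s = g 0 :=
    fun s => is_const_of_deriv_eq_zero (fun t => (hg' t).differentiableAt)
      (fun t => (hg' t).deriv) s 0
  refine ⟨g 0, fun s => ?_⟩
  have hxc : x s - g 0 = (-(k₀ ^ 2)⁻¹) • v s := by
    rw [← hgconst s, hg_def]; module
  rw [hxc]
  have hc1 : ((-(k₀ ^ 2)⁻¹) • v s).1 = (-(k₀ ^ 2)⁻¹) * (v s).1 := rfl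
  have hc2 : ((-(k₀ ^ 2)⁻¹) • v s).2 = (-(k₀ ^ 2)⁻¹) * (v s).2 := rfl
  unfold nrm
  rw [hc1, hc2]
  have : (-(k₀ ^ 2)⁻¹ * (v s).1) ^ 2 + (-(k₀ ^ 2)⁻¹ * (v s).2) ^ 2
      = ((k₀ ^ 2)⁻¹) ^ 2 * N s := by ring
  rw [this, hNval s]
  rw [show ((k₀ ^ 2)⁻¹) ^ 2 * k₀ ^ 2 = (1 / k₀) ^ 2 by field_simp]
  exact Real.sqrt_sq (by positivity)
end
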